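/- For reals 0 < V_S < V_M < V_L, in the 4-asset, 3-scenario DSHP instance with k = 1, first-stage values (V_S, V_M, V_S, V_S) and second-stage value matrix f where f_{1,1} = f_{3,2} = f_{4,3} = V_L and all other entries equal V_S, with equal scenario probabilities 1/3: the optimal revenue equals V_L (sell the most expensive asset in each scenario at stage 2), while any solution selling one asset at the first stage achieves revenue at most V_M; hence the ratio V_M/V_L is attained. -/

import Mathlib

open Finset

section ProbabilityVector

variable {ι : Type*} [Fintype ι] {p : ι → ℝ}

theorem sum_mul_const_of_sum_eq_one (hp : ∑ j, p j = 1) (M : ℝ) :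
    ∑ j, p j * M = M := by
  rw [← sum_mul, hp, one_mul]

theorem sum_mul_le_of_sum_eq_one (hp_nonneg : ∀ j, 0 ≤ p j) (hp : ∑ j, p j = 1)
    {g : ι → ℝ} {M : ℝ} (hg : ∀ j, g j ≤ M) : ∑ j, p j * g j ≤ M :=
  calc ∑ j, p j * g j ≤ ∑ j, p j * M :=
        sum_le_sum fun j _ => mul_le_mul_of_nonneg_left (hg j) (hp_nonneg j)
    _ = M := sum_mul_const_of_sum_eq_one hp M

end ProbabilityVector

theorem sum_fin_three_one_third : ∑ _j : Fin 3, (1 / 3 : ℝ) = 1 := by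
  norm_num

section Instance

variable {VS VM VL : ℝ}

theorem secondStage_le (hSL : VS ≤ VL) (i : Fin 4) (j : Fin 3) :
    (![![VL, VS, VS], ![VS, VS, VS], ![VS, VL, VS], ![VS, VS, VL]] : Fin 4 → Fin 3 → ℝ) i j
      ≤ VL := by
  fin_cases i <;> fin_cases j <;> simp [hSL]

theorem secondStage_best (j : Fin 3) :
    (![![VL, VS, VS], ![VS, VS, VS], ![VS, VL, VS], ![VS, VS, VL]] : Fin 4 → Fin 3 → ℝ)
      (![0, 2, 3] j) j = VL := by
  fin_cases j <;> rfl

theorem firstStage_le (hSM : VS ≤ VM) (i : Fin 4) : (![VS, VM, VS, VS] : Fin 4 → ℝ) i ≤ VM := by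
  fin_cases i <;> simp [hSM]

end Instance

theorem tight_example_general (VS VM VL : ℝ) (h1 : VS < VM) (h2 : VM < VL)
    (c : Fin 4 → ℝ) (hc : c = ![VS, VM, VS, VS])
    (f : Fin 4 → Fin 3 → ℝ)
    (hf : f = ![![VL, VS, VS], ![VS, VS, VS], ![VS, VL, VS], ![VS, VS, VL]]) :
    (∑ j : Fin 3, (1 / 3 : ℝ) * f (![0, 2, 3] j) j = VL) ∧
    (c 1 = VM) ∧
    (∀ sel : Fin 3 → Fin 4, ∑ j : Fin 3, (1 / 3 : ℝ) * f (sel j) j ≤ VL) ∧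
    (∀ i : Fin 4, c i ≤ VL) ∧
    (∀ i : Fin 4, c i ≤ VM) := by
  subst hc hf
  have hthird : ∀ _j : Fin 3, (0 : ℝ) ≤ 1 / 3 := fun _ => by norm_num
  have hc_le : ∀ i, (![VS, VM, VS, VS] : Fin 4 → ℝ) i ≤ VM := firstStage_le h1.le
  refine ⟨?_, rfl, fun sel => ?_, fun i => (hc_le i).trans h2.le, hc_le⟩
  · simp only [secondStage_best]
    exact sum_mul_const_of_sum_eq_one sum_fin_three_one_third VL
  · exact sum_mul_le_of_sum_eq_one hthird sum_fin_three_one_third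
      fun j => secondStage_le (h1.trans h2).le (sel j) j

theorem tight_example (VS VM VL : ℝ) (h0 : 0 < VS) (h1 : VS < VM) (h2 : VM < VL)
    (c : Fin 4 → ℝ) (hc : c = ![VS, VM, VS, VS])
    (f : Fin 4 → Fin 3 → ℝ)
    (hf : f = ![![VL, VS, VS], ![VS, VS, VS], ![VS, VL, VS], ![VS, VS, VL]]) :
    (∑ j : Fin 3, (1 / 3 : ℝ) * f (![0, 2, 3] j) j = VL) ∧
    (c 1 = VM) ∧
    (∀ sel : Fin 3 → Fin 4, ∑ j : Fin 3, (1 / 3 : ℝ) * f (sel j) j ≤ VL) ∧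
    (∀ i : Fin 4, c i ≤ VL) ∧
    (∀ i : Fin 4, c i ≤ VM) :=
  tight_example_general VS VM VL h1 h2 c hc f hf
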